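/- Let z_1 ≤ z_2 ≤ … ≤ z_N be real numbers, z̄ = (1/N)·Σ_{n=1}^N z_n, and let 1/2 < α < 1. Define φ̂_α(x) = z̄ + ((2α − 1)/(Nα))·Σ_{n : z_n < x} (x − z_n). If x ∈ [z_1, z_N], then φ̂_α(x) ∈ [z̄, z_N] ⊆ [z_1, z_N]. -/

import Mathlib

open Finset

/-- The one-sided empirical fixed point map
`φ̂_α(x) = z̄ + ((2α − 1)/(Nα))·Σ_{n : z_n < x} (x − z_n)`,
for a sample `z 0, …, z n` of size `N = n + 1` with mean `z̄`. -/
noncomputable def phiHat' (n : ℕ) (z : Fin (n + 1) → ℝ) (α : ℝ) (x : ℝ) : ℝ :=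
  (∑ i, z i) / (n + 1) +
    (2 * α - 1) / ((n + 1) * α) * ∑ i ∈ univ.filter (fun i => z i < x), (x - z i)

/-- For `1/2 < α < 1` and `x ∈ [z_1, z_N]`, one has
`φ̂_α(x) ∈ [z̄, z_N] ⊆ [z_1, z_N]`. -/
theorem stmt_12 (n : ℕ) (z : Fin (n + 1) → ℝ) (hz : Monotone z)
    (α : ℝ) (hα0 : 1 / 2 < α) (hα1 : α < 1) (x : ℝ)
    (hx : x ∈ Set.Icc (z 0) (z (Fin.last n))) :
    phiHat' n z α x ∈ Set.Icc ((∑ i, z i) / (n + 1)) (z (Fin.last n)) ∧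
      Set.Icc ((∑ i, z i) / (n + 1)) (z (Fin.last n)) ⊆ Set.Icc (z 0) (z (Fin.last n)) := by
  obtain ⟨hx0, hxN⟩ := hx
  have hαpos : 0 < α := by linarith
  have hNpos : (0:ℝ) < (n:ℝ) + 1 := by positivity
  set S : ℝ := ∑ i ∈ univ.filter (fun i => z i < x), (x - z i) with hS
  have hc0 : 0 ≤ (2 * α - 1) / ((n + 1) * α) := by
    apply div_nonneg <;> nlinarith
  have hS0 : 0 ≤ S := by
    apply Finset.sum_nonneg
    intro i hi
    have := (Finset.mem_filter.mp hi).2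
    linarith
  have hzle : ∀ i : Fin (n+1), z i ≤ z (Fin.last n) := fun i => hz (Fin.le_last i)
  have hSle : S ≤ (n + 1) * z (Fin.last n) - ∑ i, z i := by
    have h1 : S ≤ ∑ i ∈ univ.filter (fun i => z i < x), (z (Fin.last n) - z i) := by
      apply Finset.sum_le_sum
      intro i _
      linarith
    have h2 : ∑ i ∈ univ.filter (fun i => z i < x), (z (Fin.last n) - z i)
        ≤ ∑ i, (z (Fin.last n) - z i) := by
      apply Finset.sum_le_sum_of_subset_of_nonneg (Finset.filter_subset _ _)
      intro i _ _
      linarith [hzle i]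
    have h3 : ∑ i : Fin (n+1), (z (Fin.last n) - z i)
        = (n + 1) * z (Fin.last n) - ∑ i, z i := by
      rw [Finset.sum_sub_distrib, Finset.sum_const, Finset.card_univ, Fintype.card_fin]
      push_cast
      ring
    linarith
  have hcle : (2 * α - 1) / ((n + 1) * α) ≤ 1 / (n + 1) := by
    rw [div_le_div_iff₀ (by positivity) hNpos]
    nlinarith
  have hmul : (2 * α - 1) / ((n + 1) * α) * S
      ≤ z (Fin.last n) - (∑ i, z i) / (n + 1) := by
    calc (2 * α - 1) / ((n + 1) * α) * S ≤ (1 / (n + 1)) * S :=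
          mul_le_mul_of_nonneg_right hcle hS0
      _ ≤ (1 / (n + 1)) * ((n + 1) * z (Fin.last n) - ∑ i, z i) := by
          apply mul_le_mul_of_nonneg_left hSle
          positivity
      _ = z (Fin.last n) - (∑ i, z i) / (n + 1) := by
          field_simp
  have hmean_le : (∑ i, z i) / (n + 1) ≤ z (Fin.last n) := by
    rw [div_le_iff₀ hNpos]
    calc ∑ i, z i ≤ ∑ _i : Fin (n+1), z (Fin.last n) := Finset.sum_le_sum fun i _ => hzle i
      _ = z (Fin.last n) * ((n:ℝ) + 1) := by
          rw [Finset.sum_const, Finset.card_univ, Fintype.card_fin]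
          push_cast; ring
  have hmean_ge : z 0 ≤ (∑ i, z i) / (n + 1) := by
    rw [le_div_iff₀ hNpos]
    calc z 0 * ((n:ℝ) + 1) = ∑ _i : Fin (n+1), z 0 := by
          rw [Finset.sum_const, Finset.card_univ, Fintype.card_fin]
          push_cast; ring
      _ ≤ ∑ i, z i := Finset.sum_le_sum fun i _ => hz (Fin.zero_le i)
  refine ⟨⟨?_, ?_⟩, ?_⟩
  · unfold phiHat'
    nlinarith
  · unfold phiHat'
    rw [← hS]
    linarith
  · intro y hy
    exact ⟨le_trans hmean_ge hy.1, hy.2⟩
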